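/- arXiv:2408.13717 — 3 statements merged into one kernel-verified Lean document; each statement's English description precedes it below -/
import Mathlib

section
/- Let R > 0, T* > 0, T₀ > 0, ΔS > 0 and 0 < E₁ ≤ E₂. Then the TS2 shift-factor function T ↦ ln a_T(T) = E₁/(RT) + ((E₂−E₁)/(RT))·(1 + exp{(ΔS/R)(1 − T*/T)})⁻¹ − E₁/(RT₀) − ((E₂−E₁)/(RT₀))·(1 + exp{(ΔS/R)(1 − T*/T₀)})⁻¹ is strictly decreasing on (0, ∞). -/
/-- The TS2 shift-factor function T ↦ ln a_T(T) is strictly decreasing on (0, ∞). -/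
theorem ts2_shift_factor_strictAnti
    (R Tstar T0 ΔS E1 E2 : ℝ)
    (hR : 0 < R) (hTstar : 0 < Tstar) (hT0 : 0 < T0) (hΔS : 0 < ΔS)
    (hE1 : 0 < E1) (hE12 : E1 ≤ E2) :
    StrictAntiOn
      (fun T : ℝ =>
        E1 / (R * T) +
          (E2 - E1) / (R * T) * (1 + Real.exp (ΔS / R * (1 - Tstar / T)))⁻¹ -
          E1 / (R * T0) -
          (E2 - E1) / (R * T0) * (1 + Real.exp (ΔS / R * (1 - Tstar / T0)))⁻¹)
      (Set.Ioi 0) := by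
  intro x hx y hy hxy
  simp only [Set.mem_Ioi] at hx hy
  have hRx : 0 < R * x := mul_pos hR hx
  have hRy : 0 < R * y := mul_pos hR hy
  have h1 : E1 / (R * y) < E1 / (R * x) := by
    apply div_lt_div_of_pos_left hE1 hRx
    exact mul_lt_mul_of_pos_left hxy hR
  have hE : 0 ≤ E2 - E1 := by linarith
  have hdiv : Tstar / y ≤ Tstar / x := by gcongr
  have hexp : Real.exp (ΔS / R * (1 - Tstar / x)) ≤ Real.exp (ΔS / R * (1 - Tstar / y)) := by
    apply Real.exp_le_exp.mpr
    apply mul_le_mul_of_nonneg_left _ (le_of_lt (div_pos hΔS hR))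
    linarith
  have hpx : 0 < 1 + Real.exp (ΔS / R * (1 - Tstar / x)) := by positivity
  have hinv : (1 + Real.exp (ΔS / R * (1 - Tstar / y)))⁻¹ ≤
      (1 + Real.exp (ΔS / R * (1 - Tstar / x)))⁻¹ := by
    apply inv_anti₀ hpx
    linarith
  have hdiv2 : (E2 - E1) / (R * y) ≤ (E2 - E1) / (R * x) := by gcongr
  have hinvy : 0 ≤ (1 + Real.exp (ΔS / R * (1 - Tstar / y)))⁻¹ := by positivity
  have h2 : (E2 - E1) / (R * y) * (1 + Real.exp (ΔS / R * (1 - Tstar / y)))⁻¹ ≤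
      (E2 - E1) / (R * x) * (1 + Real.exp (ΔS / R * (1 - Tstar / x)))⁻¹ := by
    apply mul_le_mul hdiv2 hinv hinvy
    positivity
  simp only []
  linarith
end

section
/- Let q₁, …, q_k be independent random variables on a product probability space, and suppose y = c + Σ_{j=1}^k f_j(q_j) is an additive model with constant c and square-integrable mean-zero components f_j(q_j), and Var(y) > 0. If the first-order Sobol' index of input q_i vanishes, S_i = Var(E[y | q_i]) / Var(y) = 0, then f_i(q_i) = 0 almost surely; consequently y = c + Σ_{j≠i} f_j(q_j) almost surely, i.e. the output does not depend on q_i and the factor q_i may be fixed at any value without affecting the output. -/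
/-!
Under the product measure the coordinates are independent, so conditioning on `q_i` keeps the
`q_i`-measurable term `f_i(q_i)` and replaces every other component by its mean `0`:
`E[y | q_i] = c + f_i(q_i)`. Since `Var(y) > 0`, `S_i = 0` says `Var(f_i(q_i)) = 0`, and a
mean-zero variable with zero variance vanishes almost surely.
-/

open MeasureTheory ProbabilityTheory

/-- The σ-algebra on a product space generated by the i-th coordinate. -/
def coordSigma {k : ℕ} {Ω : Fin k → Type*} [∀ i, MeasurableSpace (Ω i)] (i : Fin k) :
    MeasurableSpace (∀ i, Ω i) :=
  MeasurableSpace.comap (fun ω => ω i) inferInstance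

section Coordinates

variable {k : ℕ} {Ω : Fin k → Type*} [∀ i, MeasurableSpace (Ω i)]
  {μ : ∀ i, Measure (Ω i)} [∀ i, IsProbabilityMeasure (μ i)]

lemma coordSigma_le (i : Fin k) : coordSigma (Ω := Ω) i ≤ MeasurableSpace.pi :=
  (measurable_pi_apply i).comap_le

lemma indep_coordSigma {i j : Fin k} (hij : i ≠ j) :
    Indep (coordSigma i) (coordSigma j) (Measure.pi μ) :=
  (IndepFun_iff_Indep _ _ _).1 <|
    (iIndepFun_pi (X := fun _ => id) fun _ => aemeasurable_id).indepFun hij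

lemma MeasureTheory.AEStronglyMeasurable.comp_eval_coordSigma {i : Fin k} {g : Ω i → ℝ}
    (hg : AEStronglyMeasurable g (μ i)) :
    AEStronglyMeasurable[coordSigma i] (fun ω => g (ω i)) (Measure.pi μ) :=
  ⟨fun ω => hg.mk g (ω i),
    hg.stronglyMeasurable_mk.comp_measurable (Measurable.of_comap_le le_rfl),
    hg.ae_eq_mk.comp_tendsto Measure.tendsto_eval_ae_ae⟩

lemma condExp_comp_eval_self {i : Fin k} {g : Ω i → ℝ} (hg : Integrable g (μ i)) :
    (Measure.pi μ)[fun ω => g (ω i) | coordSigma i] =ᵐ[Measure.pi μ] fun ω => g (ω i) :=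
  condExp_of_aestronglyMeasurable' (coordSigma_le i) hg.1.comp_eval_coordSigma
    (integrable_comp_eval hg)

lemma condExp_comp_eval_of_ne {i j : Fin k} (hji : j ≠ i) {g : Ω j → ℝ}
    (hg : AEStronglyMeasurable g (μ j)) :
    (Measure.pi μ)[fun ω => g (ω j) | coordSigma i]
      =ᵐ[Measure.pi μ] fun _ => ∫ t, g t ∂μ j := by
  have hgj := hg.comp_eval_coordSigma
  calc (Measure.pi μ)[fun ω => g (ω j) | coordSigma i]
      =ᵐ[Measure.pi μ] (Measure.pi μ)[hgj.mk _ | coordSigma i] := condExp_congr_ae hgj.ae_eq_mk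
    _ =ᵐ[Measure.pi μ] fun _ => (Measure.pi μ)[hgj.mk _] :=
      condExp_indep_eq (coordSigma_le j) (coordSigma_le i) hgj.stronglyMeasurable_mk
        (indep_coordSigma hji)
    _ = fun _ => ∫ t, g t ∂μ j := by
      rw [← integral_congr_ae hgj.ae_eq_mk, integral_comp_eval hg]

lemma condExp_additive_coordSigma (c : ℝ) {f : ∀ j, Ω j → ℝ}
    (hf : ∀ j, Integrable (f j) (μ j)) (hmean : ∀ j, ∫ t, f j t ∂μ j = 0) (i : Fin k) :
    (Measure.pi μ)[fun ω => c + ∑ j, f j (ω j) | coordSigma i]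
      =ᵐ[Measure.pi μ] fun ω => c + f i (ω i) := by
  have hterm : ∀ j, (Measure.pi μ)[fun ω => f j (ω j) | coordSigma i]
      =ᵐ[Measure.pi μ] fun ω => if j = i then f j (ω j) else 0 := by
    intro j
    by_cases hji : j = i
    · subst hji
      simpa using condExp_comp_eval_self (hf j)
    · simpa [hji, hmean j] using condExp_comp_eval_of_ne hji (hf j).1
  have hsum : (Measure.pi μ)[∑ j, fun ω : ∀ j, Ω j => f j (ω j) | coordSigma i]
      =ᵐ[Measure.pi μ] fun ω => f i (ω i) := by
    refine (condExp_finsetSum (fun j _ => integrable_comp_eval (hf j)) _).trans ?_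
    refine (eventuallyEq_sum fun j _ => hterm j).trans (.of_eq ?_)
    ext ω
    simp
  have hsplit : (fun ω : ∀ j, Ω j => c + ∑ j, f j (ω j))
      = (fun _ => c) + ∑ j, fun ω : ∀ j, Ω j => f j (ω j) := by
    ext ω
    simp
  rw [hsplit]
  refine (condExp_add (integrable_const c)
    (integrable_finsetSum' _ fun j _ => integrable_comp_eval (hf j)) _).trans ?_
  rw [condExp_const (coordSigma_le i)]
  exact Filter.EventuallyEq.rfl.add hsum

end Coordinates

/-- Factor fixing for an additive model: if the first-order Sobol' index of input q_i
vanishes, then f_i(q_i) = 0 almost surely, hence y = c + Σ_{j≠i} f_j(q_j) almost surely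
and the output does not depend on q_i. -/
theorem additive_model_factor_fixing
    {k : ℕ} {Ω : Fin k → Type*} [∀ i, MeasurableSpace (Ω i)]
    (μ : ∀ i, Measure (Ω i)) [∀ i, IsProbabilityMeasure (μ i)]
    (c : ℝ) (f : ∀ i, Ω i → ℝ)
    (hmem : ∀ i, MemLp (f i) 2 (μ i))
    (hmean : ∀ i, ∫ t, f i t ∂(μ i) = 0)
    (y : (∀ i, Ω i) → ℝ) (hy : y = fun ω => c + ∑ i, f i (ω i))
    (hvar : 0 < variance y (Measure.pi μ)) (i : Fin k)
    (hSi : variance ((Measure.pi μ)[y|coordSigma i]) (Measure.pi μ) /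
        variance y (Measure.pi μ) = 0) :
    (fun ω : ∀ i, Ω i => f i (ω i)) =ᵐ[Measure.pi μ] 0 ∧
    y =ᵐ[Measure.pi μ] fun ω => c + ∑ j ∈ Finset.univ.erase i, f j (ω j) := by
  subst hy
  have hcond : (Measure.pi μ)[fun ω => c + ∑ j, f j (ω j) | coordSigma i]
      =ᵐ[Measure.pi μ] fun ω => c + f i (ω i) :=
    condExp_additive_coordSigma c (fun j => (hmem j).integrable one_le_two) hmean i
  have hvar_fi : variance (f i) (μ i) = 0 := calc
    variance (f i) (μ i) = variance (fun ω => c + f i (ω i)) (Measure.pi μ) := by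
      rw [variance_const_add (X := fun ω : ∀ j, Ω j => f i (ω i))
          ((hmem i).1.comp_quasiMeasurePreserving (Measure.quasiMeasurePreserving_eval μ i)),
        (measurePreserving_eval μ i).variance_fun_comp (hmem i).1.aemeasurable]
    _ = variance ((Measure.pi μ)[fun ω => c + ∑ j, f j (ω j) | coordSigma i])
        (Measure.pi μ) := variance_congr hcond.symm
    _ = 0 := (div_eq_zero_iff.1 hSi).resolve_right hvar.ne'
  have hfi : f i =ᵐ[μ i] 0 := by
    filter_upwards [ae_eq_integral_of_variance_eq_zero (hmem i) hvar_fi] with t ht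
    rw [ht, hmean i, Pi.zero_apply]
  have hfi_pi : (fun ω : ∀ j, Ω j => f i (ω i)) =ᵐ[Measure.pi μ] 0 :=
    hfi.comp_tendsto Measure.tendsto_eval_ae_ae
  refine ⟨hfi_pi, ?_⟩
  filter_upwards [hfi_pi] with ω hω
  rw [← Finset.add_sum_erase _ _ (Finset.mem_univ i), hω, Pi.zero_apply, zero_add]
end

section
/- Let f : X × Y → ℝ be square-integrable with respect to the product measure μ ⊗ ν of two probability measures, and let q_i, q_i′ (valued in X, law μ) and q_{∼i} (valued in Y, law ν) be mutually independent random variables. Set A = f(q_i, q_{∼i}) and A_B^{(i)} = f(q_i′, q_{∼i}). Then (1/2)·E[(A − A_B^{(i)})²] = E[Var(f | q_{∼i})], i.e. the expectation of the Jansen estimator kernel equals the expected conditional variance of the output given all inputs except the i-th, which is the numerator of the total-order Sobol' index S_{Ti}. -/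
/-!
Pushing `P` forward along `(q_i, q_i', q_{∼i})` turns the left side into an integral over
`μ ⊗ μ ⊗ ν`, which Fubini evaluates with `q_{∼i} = y` outermost. For fixed `y`, the slice
`g = f(·, y)` is in `L²(μ)` for a.e. `y`, and `g(x) - g(x')` under `μ ⊗ μ` is a sum of
independent copies of `g` and `-g` with mean zero, so its second moment is `2 Var_μ(g)`.
-/

open MeasureTheory ProbabilityTheory

section

variable {X Y : Type*} [MeasurableSpace X] [MeasurableSpace Y]

lemma integral_sub_sq_prod_self {μ : Measure X} [IsProbabilityMeasure μ] {g : X → ℝ}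
    (hg : MemLp g 2 μ) :
    ∫ p, (g p.1 - g p.2) ^ 2 ∂(μ.prod μ) = 2 * Var[g; μ] := by
  have hg₁ : Integrable g μ := hg.integrable one_le_two
  have hmean : ∫ p, (g p.1 - g p.2) ∂(μ.prod μ) = 0 := by
    rw [integral_sub (hg₁.comp_fst μ) (hg₁.comp_snd μ), integral_fun_fst, integral_fun_snd,
      sub_self]
  calc ∫ p, (g p.1 - g p.2) ^ 2 ∂(μ.prod μ)
      = Var[fun p ↦ g p.1 + (-g) p.2; μ.prod μ] := by
        simp only [Pi.neg_apply, ← sub_eq_add_neg]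
        exact (variance_of_integral_eq_zero (by fun_prop) hmean).symm
    _ = 2 * Var[g; μ] := by rw [variance_add_prod hg hg.neg, variance_neg, two_mul]

lemma MeasureTheory.MemLp.prod_left_ae {μ : Measure X} {ν : Measure Y} [SFinite μ] [SFinite ν]
    {f : X × Y → ℝ} (hf : MemLp f 2 (μ.prod ν)) :
    ∀ᵐ y ∂ν, MemLp (fun x ↦ f (x, y)) 2 μ := by
  have hmeas : ∀ᵐ y ∂ν, AEStronglyMeasurable (fun x ↦ f (x, y)) μ :=
    hf.aestronglyMeasurable.prod_swap.prodMk_left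
  filter_upwards [hmeas, hf.integrable_sq.prod_left_ae] with y hy hy_sq
  exact (memLp_two_iff_integrable_sq hy).mpr hy_sq

/-- The Jansen kernel `(A - A_B^{(i)})²` as a function of `(q_i, q_i', q_{∼i})`. -/
def jansenKernel (f : X × Y → ℝ) (p : X × X × Y) : ℝ :=
  (f (p.1, p.2.2) - f (p.2.1, p.2.2)) ^ 2

variable {μ : Measure X} {ν : Measure Y} [IsProbabilityMeasure μ] [IsProbabilityMeasure ν]
  {f : X × Y → ℝ}

lemma integrable_jansenKernel (hf : MemLp f 2 (μ.prod ν)) :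
    Integrable (jansenKernel f) (μ.prod (μ.prod ν)) := by
  have hA : MemLp (fun p : X × X × Y ↦ f (p.1, p.2.2)) 2 (μ.prod (μ.prod ν)) :=
    hf.comp_measurePreserving ((MeasurePreserving.id μ).prod measurePreserving_snd)
  have hB : MemLp (fun p : X × X × Y ↦ f p.2) 2 (μ.prod (μ.prod ν)) :=
    hf.comp_measurePreserving measurePreserving_snd
  exact (hA.sub hB).integrable_sq

lemma integral_jansenKernel (hf : MemLp f 2 (μ.prod ν)) :
    ∫ p, jansenKernel f p ∂(μ.prod (μ.prod ν)) = 2 * ∫ y, Var[fun x ↦ f (x, y); μ] ∂ν := by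
  have hassoc := measurePreserving_prodAssoc μ μ ν
  have hint : Integrable (fun z ↦ jansenKernel f (MeasurableEquiv.prodAssoc z))
      ((μ.prod μ).prod ν) :=
    hassoc.integrable_comp_of_integrable (integrable_jansenKernel hf)
  rw [← hassoc.integral_comp', integral_prod_symm _ hint, ← integral_const_mul]
  refine integral_congr_ae ?_
  filter_upwards [hf.prod_left_ae] with y hy
  exact integral_sub_sq_prod_self (g := fun x ↦ f (x, y)) hy

end

theorem jansen_total_order_estimator_general
    {X Y W : Type*} [MeasurableSpace X] [MeasurableSpace Y] [MeasurableSpace W]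
    (μ : Measure X) (ν : Measure Y) (P : Measure W)
    [IsProbabilityMeasure μ] [IsProbabilityMeasure ν]
    (f : X × Y → ℝ) (hf : MemLp f 2 (μ.prod ν))
    (qi qi' : W → X) (qI : W → Y)
    (hindep : Measure.map (fun w => (qi w, qi' w, qI w)) P = μ.prod (μ.prod ν)) :
    (1 / 2 : ℝ) * ∫ w, (f (qi w, qI w) - f (qi' w, qI w)) ^ 2 ∂P =
      ∫ y, variance (fun x => f (x, y)) μ ∂ν := by
  have hq : AEMeasurable (fun w ↦ (qi w, qi' w, qI w)) P :=
    .of_map_ne_zero (hindep ▸ IsProbabilityMeasure.ne_zero _)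
  have hK := integrable_jansenKernel hf
  rw [← hindep] at hK
  calc (1 / 2 : ℝ) * ∫ w, (f (qi w, qI w) - f (qi' w, qI w)) ^ 2 ∂P
      = (1 / 2 : ℝ) * ∫ p, jansenKernel f p ∂(P.map fun w ↦ (qi w, qi' w, qI w)) := by
        rw [integral_map hq hK.aestronglyMeasurable]; rfl
    _ = ∫ y, variance (fun x => f (x, y)) μ ∂ν := by
        rw [hindep, integral_jansenKernel hf]; ring

/-- Jansen pick-freeze identity: with A = f(q_i, q_{∼i}) and the cross-sample
A_B^{(i)} = f(q_i′, q_{∼i}), built from three mutually independent random variables with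
laws μ, μ, ν, one has (1/2)·E[(A − A_B^{(i)})²] = E[Var(f | q_{∼i})], the numerator of
the total-order Sobol' index. Here Var(f | q_{∼i}) is the function
y ↦ Var_μ(x ↦ f(x, y)). -/
theorem jansen_total_order_estimator
    {X Y W : Type*} [MeasurableSpace X] [MeasurableSpace Y] [MeasurableSpace W]
    (μ : Measure X) (ν : Measure Y) (P : Measure W)
    [IsProbabilityMeasure μ] [IsProbabilityMeasure ν] [IsProbabilityMeasure P]
    (f : X × Y → ℝ) (hf : MemLp f 2 (μ.prod ν))
    (qi qi' : W → X) (qI : W → Y)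
    (hqi : Measurable qi) (hqi' : Measurable qi') (hqI : Measurable qI)
    (hindep : Measure.map (fun w => (qi w, qi' w, qI w)) P = μ.prod (μ.prod ν)) :
    (1 / 2 : ℝ) * ∫ w, (f (qi w, qI w) - f (qi' w, qI w)) ^ 2 ∂P =
      ∫ y, variance (fun x => f (x, y)) μ ∂ν :=
  jansen_total_order_estimator_general μ ν P f hf qi qi' qI hindep
end
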